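/- Let 𝔫 be a finite-dimensional real 2-step nilpotent Lie algebra that is non-singular, with BCH group law ∘, complement V∞ of ⁅𝔫, 𝔫⁆, projection π, norm ‖·‖∞ on V∞, and norm ‖·‖_Z on ⁅𝔫, 𝔫⁆. Let d be a left-invariant metric on 𝔫 such that: (i) for every R > 0, π({h ∈ 𝔫 : d(0, h) ≤ R}) = {v ∈ V∞ : ‖v‖∞ ≤ R}; and (ii) there is K′ > 0 such that for every ρ ≥ 1 and all x, y ∈ 𝔫 with d(0, x) ≤ ρ, d(0, y) ≤ ρ and (−x) ∘ y ∈ ⁅𝔫, 𝔫⁆, one has ‖(−x) ∘ y‖_Z ≤ K′ρ². Then there exists K > 0 such that for every integer M ≥ 1, every real t ≥ M, every R with 0 < R < 1, and all h₁, …, h_M ∈ 𝔫 with d(0, h_i) = t/M for each i and d(0, h₁ ∘ ⋯ ∘ h_M) = t, the number of indices i ∈ {1, …, M} with ‖π(h_i)‖∞ < R·t/M is at most K/(1−R)². -/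

import Mathlib

noncomputable section

/-- The Baker–Campbell–Hausdorff group law on a 2-step nilpotent Lie algebra. -/
def bch {𝔫 : Type*} [LieRing 𝔫] [LieAlgebra ℝ 𝔫] (x y : 𝔫) : 𝔫 :=
  x + y + (1 / 2 : ℝ) • ⁅x, y⁆

/-- The derived subalgebra ⁅𝔫, 𝔫⁆, as a linear subspace: the span of all brackets. -/
def derivedSubalg (𝔫 : Type*) [LieRing 𝔫] [LieAlgebra ℝ 𝔫] : Submodule ℝ 𝔫 :=
  Submodule.span ℝ {z : 𝔫 | ∃ x y : 𝔫, ⁅x, y⁆ = z}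

/-- A 2-step nilpotent Lie algebra is non-singular if every element of `⁅𝔫, 𝔫⁆` is a
bracket `⁅x, y⁆` for every fixed `x ∉ ⁅𝔫, 𝔫⁆`. -/
def Nonsingular (𝔫 : Type*) [LieRing 𝔫] [LieAlgebra ℝ 𝔫] : Prop :=
  ∀ z ∈ derivedSubalg 𝔫, ∀ x : 𝔫, x ∉ derivedSubalg 𝔫 → ∃ y : 𝔫, ⁅x, y⁆ = z

/-- The ordered BCH product `x₁ ∘ x₂ ∘ ⋯ ∘ x_m` of a list of elements. -/
def bchProd {𝔫 : Type*} [LieRing 𝔫] [LieAlgebra ℝ 𝔫] (l : List 𝔫) : 𝔫 :=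
  l.foldr bch 0

/-- `d` is a metric, given as a two-variable distance function. -/
structure IsMetricFun {X : Type*} (d : X → X → ℝ) : Prop where
  refl : ∀ x, d x x = 0
  eq_of_dist_eq_zero : ∀ x y, d x y = 0 → x = y
  symm : ∀ x y, d x y = d y x
  triangle : ∀ x y z, d x z ≤ d x y + d y z

/-- `f` is a norm on the subspace `W`. -/
structure IsNormOn {𝔫 : Type*} [AddCommGroup 𝔫] [Module ℝ 𝔫]
    (W : Submodule ℝ 𝔫) (f : 𝔫 → ℝ) : Prop where
  nonneg : ∀ x ∈ W, 0 ≤ f x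
  eq_zero : ∀ x ∈ W, f x = 0 → x = 0
  smul : ∀ (c : ℝ), ∀ x ∈ W, f (c • x) = |c| * f x
  add_le : ∀ x ∈ W, ∀ y ∈ W, f (x + y) ≤ f x + f y

/-!
Replace every bad piece `hᵢ` by some `hᵢ'` with the same projection and `d(0, hᵢ') ≤ R t/M`,
which exists by (i). The differences `hᵢ - hᵢ'` are central, of size at most `K' (t/M)²` by (ii),
and changing the pieces by central elements moves the endpoint by their sum `z`.
Nonsingularity writes every central `z` as `⁅x₀, y⁆` with `y` depending linearly on `z`;
rescaling the projections of `x₀` and `y` in opposite ways and bounding the commutator by left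
invariance gives `d(0, z) ≤ C √‖z‖_Z`. If `m` pieces are bad, the triangle inequality along the
modified path gives `t ≤ t - m (1 - R) t/M + C √(m K') t/M`, hence `m (1 - R)² ≤ C² K'`.
-/

section NilpotentLie

variable {𝔫 : Type*} [LieRing 𝔫] [LieAlgebra ℝ 𝔫]

theorem lie_mem_derivedSubalg (x y : 𝔫) : ⁅x, y⁆ ∈ derivedSubalg 𝔫 :=
  Submodule.subset_span ⟨x, y, rfl⟩

theorem lie_eq_zero_of_mem_derivedSubalg_left (h2 : ∀ x y z : 𝔫, ⁅⁅x, y⁆, z⁆ = 0) {z : 𝔫}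
    (hz : z ∈ derivedSubalg 𝔫) (a : 𝔫) : ⁅z, a⁆ = 0 := by
  induction hz using Submodule.span_induction with
  | mem x hx => obtain ⟨u, v, rfl⟩ := hx; exact h2 u v a
  | zero => exact zero_lie a
  | add x y _ _ hx hy => rw [add_lie, hx, hy, add_zero]
  | smul c x _ hx => rw [smul_lie, hx, smul_zero]

theorem lie_eq_zero_of_mem_derivedSubalg_right (h2 : ∀ x y z : 𝔫, ⁅⁅x, y⁆, z⁆ = 0) {z : 𝔫}
    (hz : z ∈ derivedSubalg 𝔫) (a : 𝔫) : ⁅a, z⁆ = 0 := by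
  rw [← lie_skew, lie_eq_zero_of_mem_derivedSubalg_left h2 hz, neg_zero]

theorem lie_add_of_mem_derivedSubalg (h2 : ∀ x y z : 𝔫, ⁅⁅x, y⁆, z⁆ = 0) (a b : 𝔫) {z w : 𝔫}
    (hz : z ∈ derivedSubalg 𝔫) (hw : w ∈ derivedSubalg 𝔫) : ⁅a + z, b + w⁆ = ⁅a, b⁆ := by
  rw [add_lie, lie_add, lie_add, lie_eq_zero_of_mem_derivedSubalg_left h2 hz,
    lie_eq_zero_of_mem_derivedSubalg_right h2 hw,
    lie_eq_zero_of_mem_derivedSubalg_right h2 hw]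
  simp

theorem bch_add_of_mem_derivedSubalg (h2 : ∀ x y z : 𝔫, ⁅⁅x, y⁆, z⁆ = 0) (a b : 𝔫) {z w : 𝔫}
    (hz : z ∈ derivedSubalg 𝔫) (hw : w ∈ derivedSubalg 𝔫) :
    bch (a + z) (b + w) = bch a b + (z + w) := by
  rw [bch, bch, lie_add_of_mem_derivedSubalg h2 a b hz hw]
  abel

theorem bch_of_mem_derivedSubalg_right (h2 : ∀ x y z : 𝔫, ⁅⁅x, y⁆, z⁆ = 0) (a : 𝔫) {z : 𝔫}
    (hz : z ∈ derivedSubalg 𝔫) : bch a z = a + z := by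
  rw [bch, lie_eq_zero_of_mem_derivedSubalg_right h2 hz, smul_zero, add_zero]

theorem bch_neg_of_sub_mem_derivedSubalg (h2 : ∀ x y z : 𝔫, ⁅⁅x, y⁆, z⁆ = 0) {x y : 𝔫}
    (hxy : y - x ∈ derivedSubalg 𝔫) : bch (-x) y = y - x := by
  have h : ⁅x, y⁆ = 0 := by
    simpa using lie_add_of_mem_derivedSubalg h2 x x (zero_mem _) hxy
  simp only [bch, neg_lie, h, neg_zero, smul_zero, add_zero]
  abel

theorem bch_bch_bch_neg_neg (h2 : ∀ x y z : 𝔫, ⁅⁅x, y⁆, z⁆ = 0) (a b : 𝔫) :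
    bch (bch (bch a b) (-a)) (-b) = ⁅a, b⁆ := by
  have hba : ⁅b, a⁆ = -⁅a, b⁆ := (lie_skew b a).symm
  simp only [bch, add_lie, lie_neg, neg_lie, smul_lie, lie_self, h2, hba, smul_zero, neg_neg,
    add_zero, zero_add, smul_neg]
  module

theorem bchProd_ofFn_eq_add_sum (h2 : ∀ x y z : 𝔫, ⁅⁅x, y⁆, z⁆ = 0) {M : ℕ}
    (f g : Fin M → 𝔫) (hfg : ∀ i, f i - g i ∈ derivedSubalg 𝔫) :
    bchProd (List.ofFn f) = bchProd (List.ofFn g) + ∑ i, (f i - g i) := by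
  induction M with
  | zero => simp [bchProd]
  | succ M ih =>
    have hsum : ∑ i : Fin M, (f i.succ - g i.succ) ∈ derivedSubalg 𝔫 :=
      Submodule.sum_mem _ fun i _ => hfg i.succ
    rw [List.ofFn_succ, List.ofFn_succ]
    change bch (f 0) (bchProd _) = bch (g 0) (bchProd _) + _
    rw [ih _ _ fun i => hfg i.succ, Fin.sum_univ_succ,
      ← bch_add_of_mem_derivedSubalg h2 _ _ (hfg 0) hsum]
    congr 1
    abel

theorem exists_linearMap_lie_eq (hns : Nonsingular 𝔫) {x₀ : 𝔫} (hx₀ : x₀ ∉ derivedSubalg 𝔫) :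
    ∃ s : derivedSubalg 𝔫 →ₗ[ℝ] 𝔫, ∀ z, ⁅x₀, s z⁆ = z := by
  let ad : 𝔫 →ₗ[ℝ] derivedSubalg 𝔫 :=
    { toFun := fun y => ⟨⁅x₀, y⁆, lie_mem_derivedSubalg x₀ y⟩
      map_add' := fun a b => Subtype.ext (lie_add x₀ a b)
      map_smul' := fun c a => Subtype.ext (lie_smul c x₀ a) }
  have had : LinearMap.range ad = ⊤ := by
    rw [LinearMap.range_eq_top]
    rintro ⟨z, hz⟩
    obtain ⟨y, hy⟩ := hns z hz x₀ hx₀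
    exact ⟨y, Subtype.ext hy⟩
  obtain ⟨s, hs⟩ := ad.exists_rightInverse_of_surjective had
  exact ⟨s, fun z => congrArg Subtype.val (LinearMap.congr_fun hs z)⟩

end NilpotentLie

section Projection

variable {𝔫 : Type*} [LieRing 𝔫] [LieAlgebra ℝ 𝔫] {V : Submodule ℝ 𝔫} {π : 𝔫 →ₗ[ℝ] 𝔫}

theorem sub_mem_derivedSubalg_of_proj_eq (hV : IsCompl V (derivedSubalg 𝔫))
    (hπid : ∀ v ∈ V, π v = v) (hπker : ∀ z ∈ derivedSubalg 𝔫, π z = 0) {x y : 𝔫}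
    (hxy : π x = π y) : x - y ∈ derivedSubalg 𝔫 := by
  obtain ⟨a, ha, b, hb, hab⟩ := Submodule.mem_sup.1 (hV.sup_eq_top ▸ Submodule.mem_top (x := x - y))
  have ha0 : a = 0 := by
    calc a = π (a + b) := by rw [map_add, hπid a ha, hπker b hb, add_zero]
      _ = 0 := by rw [hab, map_sub, hxy, sub_self]
  rwa [← hab, ha0, zero_add]

theorem lie_eq_lie_proj (h2 : ∀ x y z : 𝔫, ⁅⁅x, y⁆, z⁆ = 0) (hV : IsCompl V (derivedSubalg 𝔫))
    (hπmem : ∀ x, π x ∈ V) (hπid : ∀ v ∈ V, π v = v) (hπker : ∀ z ∈ derivedSubalg 𝔫, π z = 0)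
    (x y : 𝔫) : ⁅x, y⁆ = ⁅π x, π y⁆ := by
  have hsub : ∀ x, x - π x ∈ derivedSubalg 𝔫 := fun x =>
    sub_mem_derivedSubalg_of_proj_eq hV hπid hπker (hπid _ (hπmem x)).symm
  simpa using lie_add_of_mem_derivedSubalg h2 (π x) (π y) (hsub x) (hsub y)

end Projection

namespace IsNormOn

variable {E : Type*} [AddCommGroup E] [Module ℝ E] {W : Submodule ℝ E} {f : E → ℝ}

protected theorem map_zero (hf : IsNormOn W f) : f 0 = 0 := by
  simpa using hf.smul 0 0 W.zero_mem

theorem sum_le (hf : IsNormOn W f) {ι : Type*} (s : Finset ι) (g : ι → E)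
    (hg : ∀ i ∈ s, g i ∈ W) : f (∑ i ∈ s, g i) ≤ ∑ i ∈ s, f (g i) := by
  classical
  induction s using Finset.cons_induction with
  | empty => simp [hf.map_zero]
  | cons a s _ ih =>
    rw [Finset.sum_cons, Finset.sum_cons]
    have hs : ∑ i ∈ s, g i ∈ W := W.sum_mem fun i hi => hg i (Finset.mem_cons_of_mem hi)
    grw [hf.add_le _ (hg a (Finset.mem_cons_self a s)) _ hs,
      ih fun i hi => hg i (Finset.mem_cons_of_mem hi)]

abbrev normedAddCommGroup (hf : IsNormOn W f) : NormedAddCommGroup W :=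
  AddGroupNorm.toNormedAddCommGroup
    { toFun := fun x => f x
      map_zero' := hf.map_zero
      add_le' := fun x y => hf.add_le _ x.2 _ y.2
      neg' := fun x => by simpa using hf.smul (-1) x x.2
      eq_zero_of_map_eq_zero' := fun x hx => Subtype.ext (hf.eq_zero _ x.2 hx) }

theorem exists_bound {F : Type*} [AddCommGroup F] [Module ℝ F] {W' : Submodule ℝ F}
    {g : F → ℝ} [FiniteDimensional ℝ W] (hf : IsNormOn W f) (hg : IsNormOn W' g)
    (L : W →ₗ[ℝ] W') : ∃ C, 0 ≤ C ∧ ∀ x : W, g (L x) ≤ C * f x := by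
  let := hf.normedAddCommGroup
  let := hg.normedAddCommGroup
  let : NormedSpace ℝ W := ⟨fun c x => (hf.smul c x x.2).le⟩
  let : NormedSpace ℝ W' := ⟨fun c x => (hg.smul c x x.2).le⟩
  exact ⟨_, norm_nonneg _, L.toContinuousLinearMap.le_opNorm⟩

end IsNormOn

namespace IsMetricFun

variable {𝔫 : Type*} [LieRing 𝔫] [LieAlgebra ℝ 𝔫] {d : 𝔫 → 𝔫 → ℝ}

theorem zero_bch_le (hd : IsMetricFun d) (hdLeft : ∀ g x y : 𝔫, d (bch g x) (bch g y) = d x y)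
    (a b : 𝔫) : d 0 (bch a b) ≤ d 0 a + d 0 b := by
  have h : d a (bch a b) = d 0 b := by simpa [bch] using hdLeft a 0 b
  exact h ▸ hd.triangle 0 a (bch a b)

theorem zero_neg_eq (hd : IsMetricFun d)
    (hdLeft : ∀ g x y : 𝔫, d (bch g x) (bch g y) = d x y) (a : 𝔫) : d 0 (-a) = d 0 a := by
  have h := hdLeft a 0 (-a)
  simp only [bch, add_zero, lie_zero, smul_zero, add_neg_cancel, lie_neg, lie_self, neg_zero] at h
  rw [← h, hd.symm]

theorem zero_bchProd_le (hd : IsMetricFun d)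
    (hdLeft : ∀ g x y : 𝔫, d (bch g x) (bch g y) = d x y) (l : List 𝔫) :
    d 0 (bchProd l) ≤ (l.map (d 0)).sum := by
  induction l with
  | nil => simp [bchProd, hd.refl]
  | cons a l ih =>
    grw [List.map_cons, List.sum_cons, ← ih]
    exact hd.zero_bch_le hdLeft a (bchProd l)

theorem zero_bchProd_ofFn_le_add (h2 : ∀ x y z : 𝔫, ⁅⁅x, y⁆, z⁆ = 0) (hd : IsMetricFun d)
    (hdLeft : ∀ g x y : 𝔫, d (bch g x) (bch g y) = d x y) {M : ℕ} (f g : Fin M → 𝔫)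
    (hfg : ∀ i, f i - g i ∈ derivedSubalg 𝔫) :
    d 0 (bchProd (List.ofFn f)) ≤ d 0 (bchProd (List.ofFn g)) + d 0 (∑ i, (f i - g i)) := by
  rw [bchProd_ofFn_eq_add_sum h2 f g hfg,
    ← bch_of_mem_derivedSubalg_right h2 _ (Submodule.sum_mem _ fun i _ => hfg i)]
  exact hd.zero_bch_le hdLeft _ _

theorem zero_lie_le (h2 : ∀ x y z : 𝔫, ⁅⁅x, y⁆, z⁆ = 0) (hd : IsMetricFun d)
    (hdLeft : ∀ g x y : 𝔫, d (bch g x) (bch g y) = d x y) (a b : 𝔫) :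
    d 0 ⁅a, b⁆ ≤ 2 * (d 0 a + d 0 b) := by
  rw [← bch_bch_bch_neg_neg h2]
  grw [hd.zero_bch_le hdLeft, hd.zero_bch_le hdLeft, hd.zero_bch_le hdLeft,
    hd.zero_neg_eq hdLeft, hd.zero_neg_eq hdLeft]
  linarith

end IsMetricFun

section Ball

variable {𝔫 : Type*} [LieRing 𝔫] [LieAlgebra ℝ 𝔫] {V : Submodule ℝ 𝔫} {π : 𝔫 →ₗ[ℝ] 𝔫}
  {nV : 𝔫 → ℝ} {d : 𝔫 → 𝔫 → ℝ}

theorem exists_proj_eq_d_zero_le (hnV : IsNormOn V nV) (hd : IsMetricFun d)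
    (hball : ∀ R : ℝ, 0 < R → π '' {h : 𝔫 | d 0 h ≤ R} = {v : 𝔫 | v ∈ V ∧ nV v ≤ R})
    {v : 𝔫} (hv : v ∈ V) : ∃ a, π a = v ∧ d 0 a ≤ nV v := by
  rcases (hnV.nonneg v hv).eq_or_lt with h | h
  · exact ⟨0, by rw [map_zero, hnV.eq_zero v hv h.symm], by rw [hd.refl, h]⟩
  · obtain ⟨a, ha, hav⟩ : v ∈ π '' {h : 𝔫 | d 0 h ≤ nV v} := (hball _ h).symm ▸ ⟨hv, le_rfl⟩
    exact ⟨a, hav, ha⟩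

theorem d_zero_lie_le_of_pos (h2 : ∀ x y z : 𝔫, ⁅⁅x, y⁆, z⁆ = 0)
    (hV : IsCompl V (derivedSubalg 𝔫)) (hπmem : ∀ x, π x ∈ V) (hπid : ∀ v ∈ V, π v = v)
    (hπker : ∀ z ∈ derivedSubalg 𝔫, π z = 0) (hnV : IsNormOn V nV) (hd : IsMetricFun d)
    (hdLeft : ∀ g x y : 𝔫, d (bch g x) (bch g y) = d x y)
    (hball : ∀ R : ℝ, 0 < R → π '' {h : 𝔫 | d 0 h ≤ R} = {v : 𝔫 | v ∈ V ∧ nV v ≤ R})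
    (x y : 𝔫) {c : ℝ} (hc : 0 < c) :
    d 0 ⁅x, y⁆ ≤ 2 * (c * nV (π x) + c⁻¹ * nV (π y)) := by
  obtain ⟨a, hax, ha⟩ :=
    exists_proj_eq_d_zero_le hnV hd hball (V.smul_mem c (hπmem x))
  obtain ⟨b, hby, hb⟩ :=
    exists_proj_eq_d_zero_le hnV hd hball (V.smul_mem c⁻¹ (hπmem y))
  have hab : ⁅a, b⁆ = ⁅x, y⁆ := by
    rw [lie_eq_lie_proj h2 hV hπmem hπid hπker, hax, hby, smul_lie, lie_smul, smul_smul,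
      mul_inv_cancel₀ hc.ne', one_smul, ← lie_eq_lie_proj h2 hV hπmem hπid hπker]
  rw [hnV.smul _ _ (hπmem x), abs_of_pos hc] at ha
  rw [hnV.smul _ _ (hπmem y), abs_of_pos (inv_pos.2 hc)] at hb
  grw [← hab, IsMetricFun.zero_lie_le h2 hd hdLeft, ha, hb]

theorem exists_d_zero_le_mul_sqrt [FiniteDimensional ℝ 𝔫]
    (h2 : ∀ x y z : 𝔫, ⁅⁅x, y⁆, z⁆ = 0) (hns : Nonsingular 𝔫)
    (hV : IsCompl V (derivedSubalg 𝔫)) (hπmem : ∀ x, π x ∈ V) (hπid : ∀ v ∈ V, π v = v)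
    (hπker : ∀ z ∈ derivedSubalg 𝔫, π z = 0) (hnV : IsNormOn V nV)
    {nZ : 𝔫 → ℝ} (hnZ : IsNormOn (derivedSubalg 𝔫) nZ) (hd : IsMetricFun d)
    (hdLeft : ∀ g x y : 𝔫, d (bch g x) (bch g y) = d x y)
    (hball : ∀ R : ℝ, 0 < R → π '' {h : 𝔫 | d 0 h ≤ R} = {v : 𝔫 | v ∈ V ∧ nV v ≤ R}) :
    ∃ C, 0 ≤ C ∧ ∀ z ∈ derivedSubalg 𝔫, d 0 z ≤ C * √(nZ z) := by
  by_cases hD : ∀ x, x ∈ derivedSubalg 𝔫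
  · have hbot : derivedSubalg 𝔫 = ⊥ := by
      rw [eq_bot_iff, derivedSubalg, Submodule.span_le]
      rintro _ ⟨x, y, rfl⟩
      exact lie_eq_zero_of_mem_derivedSubalg_left h2 (hD x) y
    refine ⟨0, le_rfl, fun z hz => ?_⟩
    rw [hbot, Submodule.mem_bot] at hz
    rw [hz, hd.refl, zero_mul]
  obtain ⟨x₀, hx₀⟩ := not_forall.1 hD
  obtain ⟨s, hs⟩ := exists_linearMap_lie_eq hns hx₀
  obtain ⟨C₀, hC₀, hsπ⟩ :=
    hnZ.exists_bound hnV (LinearMap.codRestrict V (π ∘ₗ s) fun z => hπmem _)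
  refine ⟨2 * (nV (π x₀) + C₀), by positivity [hnV.nonneg _ (hπmem x₀)], fun z hz => ?_⟩
  rcases (hnZ.nonneg z hz).eq_or_lt with h | h
  · rw [hnZ.eq_zero z hz h.symm, hd.refl]
    positivity [hnV.nonneg _ (hπmem x₀)]
  have hsz : (√(nZ z))⁻¹ * nV (π (s ⟨z, hz⟩)) ≤ C₀ * √(nZ z) := by
    rw [inv_mul_le_iff₀ (Real.sqrt_pos.2 h), ← mul_assoc, mul_comm _ C₀, mul_assoc,
      Real.mul_self_sqrt h.le]
    exact hsπ ⟨z, hz⟩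
  calc d 0 z = d 0 ⁅x₀, s ⟨z, hz⟩⁆ := by rw [hs]
    _ ≤ _ := d_zero_lie_le_of_pos h2 hV hπmem hπid hπker hnV hd hdLeft hball _ _
          (Real.sqrt_pos.2 h)
    _ ≤ 2 * (nV (π x₀) + C₀) * √(nZ z) := by grw [hsz]; linarith

end Ball

theorem Finset.sum_le_card_mul_add_card_compl_mul {ι : Type*} [Fintype ι] [DecidableEq ι]
    (S : Finset ι) {f : ι → ℝ} {a b : ℝ} (hS : ∀ i ∈ S, f i ≤ b) (hSc : ∀ i ∉ S, f i ≤ a) :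
    ∑ i, f i ≤ S.card * b + (Fintype.card ι - S.card) * a := by
  rw [← S.sum_add_sum_compl f, ← Nat.cast_sub S.card_le_univ, ← Finset.card_compl]
  gcongr
  · simpa using S.sum_le_card_nsmul f b hS
  · simpa using Sᶜ.sum_le_card_nsmul f a fun i hi => hSc i (Finset.mem_compl.1 hi)

theorem mul_sq_le_of_mul_le_mul_sqrt {m r c a : ℝ} (hm : 0 ≤ m) (hr : 0 ≤ r) (ha : 0 ≤ a)
    (h : m * r ≤ c * √(m * a)) : m * r ^ 2 ≤ c ^ 2 * a := by
  rcases hm.eq_or_lt with rfl | hm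
  · simpa using by positivity
  have hsq : (m * r) ^ 2 ≤ m * (c ^ 2 * a) := by
    calc (m * r) ^ 2 ≤ (c * √(m * a)) ^ 2 := pow_le_pow_left₀ (by positivity) h 2
      _ = m * (c ^ 2 * a) := by rw [mul_pow, Real.sq_sqrt (by positivity)]; ring
  exact le_of_mul_le_mul_left (by nlinarith) hm

section Geodesic

variable {𝔫 : Type*} [LieRing 𝔫] [LieAlgebra ℝ 𝔫] {V : Submodule ℝ 𝔫} {π : 𝔫 →ₗ[ℝ] 𝔫}
  {nV : 𝔫 → ℝ} {d : 𝔫 → 𝔫 → ℝ}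

theorem exists_family_proj_eq_d_zero_le (hπmem : ∀ x, π x ∈ V) (hnV : IsNormOn V nV)
    (hd : IsMetricFun d)
    (hball : ∀ R : ℝ, 0 < R → π '' {h : 𝔫 | d 0 h ≤ R} = {v : 𝔫 | v ∈ V ∧ nV v ≤ R})
    {ι : Type*} (S : Finset ι) (h : ι → 𝔫) :
    ∃ h' : ι → 𝔫, (∀ i, π (h' i) = π (h i)) ∧ (∀ i ∈ S, d 0 (h' i) ≤ nV (π (h i))) ∧
      ∀ i ∉ S, h' i = h i := by
  classical
  choose w hwπ hwd using fun i => exists_proj_eq_d_zero_le hnV hd hball (hπmem (h i))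
  refine ⟨S.piecewise w h, fun i => ?_, fun i hi => ?_, fun i hi => S.piecewise_eq_of_notMem _ _ hi⟩
  · by_cases hi : i ∈ S
    · rw [S.piecewise_eq_of_mem _ _ hi, hwπ]
    · rw [S.piecewise_eq_of_notMem _ _ hi]
  · rw [S.piecewise_eq_of_mem _ _ hi]
    exact hwd i

theorem apply_sum_sub_le_card_mul (h2 : ∀ x y z : 𝔫, ⁅⁅x, y⁆, z⁆ = 0) {nZ : 𝔫 → ℝ}
    (hnZ : IsNormOn (derivedSubalg 𝔫) nZ) {K' : ℝ}
    (hKbound : ∀ ρ : ℝ, 1 ≤ ρ → ∀ x y : 𝔫, d 0 x ≤ ρ → d 0 y ≤ ρ →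
      bch (-x) y ∈ derivedSubalg 𝔫 → nZ (bch (-x) y) ≤ K' * ρ ^ 2)
    {ι : Type*} [Fintype ι] [DecidableEq ι] {ρ : ℝ} (hρ : 1 ≤ ρ) (S : Finset ι) (f g : ι → 𝔫)
    (hfg : ∀ i, f i - g i ∈ derivedSubalg 𝔫) (hf : ∀ i, d 0 (f i) ≤ ρ)
    (hg : ∀ i ∈ S, d 0 (g i) ≤ ρ) (hSc : ∀ i ∉ S, g i = f i) :
    nZ (∑ i, (f i - g i)) ≤ S.card * (K' * ρ ^ 2) := by
  grw [hnZ.sum_le _ _ fun i _ => hfg i]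
  refine (S.sum_le_card_mul_add_card_compl_mul (a := 0) (b := K' * ρ ^ 2) (fun i hi => ?_)
    fun i hi => by rw [hSc i hi, sub_self, hnZ.map_zero]).trans_eq (by ring)
  have hbch := bch_neg_of_sub_mem_derivedSubalg h2 (hfg i)
  rw [← hbch]
  exact hKbound ρ hρ _ _ (hg i hi) (hf i) (hbch ▸ hfg i)

end Geodesic

/-- Proposition 3.1 of the paper: there is `K > 0` such that, whenever a geodesic of
length `t ≥ M` from `0` is divided into `M` pieces of equal length `t/M` with increments
`h₁, …, h_M` (so `d(0, h_i) = t/M` and `d(0, h₁ ∘ ⋯ ∘ h_M) = t`), the number of indices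
`i` with `‖π(h_i)‖∞ < R·t/M` is at most `K/(1−R)²`, for every `0 < R < 1`. -/
theorem card_bad_pieces_le {𝔫 : Type*} [LieRing 𝔫] [LieAlgebra ℝ 𝔫]
    [FiniteDimensional ℝ 𝔫]
    (h2 : ∀ x y z : 𝔫, ⁅⁅x, y⁆, z⁆ = 0)
    (hns : Nonsingular 𝔫)
    (V : Submodule ℝ 𝔫) (hV : IsCompl V (derivedSubalg 𝔫))
    (π : 𝔫 →ₗ[ℝ] 𝔫) (hπmem : ∀ x : 𝔫, π x ∈ V) (hπid : ∀ v ∈ V, π v = v)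
    (hπker : ∀ z ∈ derivedSubalg 𝔫, π z = 0)
    (nV : 𝔫 → ℝ) (hnV : IsNormOn V nV)
    (nZ : 𝔫 → ℝ) (hnZ : IsNormOn (derivedSubalg 𝔫) nZ)
    (d : 𝔫 → 𝔫 → ℝ) (hd : IsMetricFun d)
    (hdLeft : ∀ g x y : 𝔫, d (bch g x) (bch g y) = d x y)
    (hball : ∀ R : ℝ, 0 < R →
      π '' {h : 𝔫 | d 0 h ≤ R} = {v : 𝔫 | v ∈ V ∧ nV v ≤ R})
    (K' : ℝ) (hK' : 0 < K')
    (hKbound : ∀ ρ : ℝ, 1 ≤ ρ → ∀ x y : 𝔫, d 0 x ≤ ρ → d 0 y ≤ ρ →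
      bch (-x) y ∈ derivedSubalg 𝔫 → nZ (bch (-x) y) ≤ K' * ρ ^ 2) :
    ∃ K : ℝ, 0 < K ∧ ∀ M : ℕ, 1 ≤ M → ∀ t : ℝ, (M : ℝ) ≤ t →
      ∀ R : ℝ, 0 < R → R < 1 →
        ∀ h : Fin M → 𝔫, (∀ i, d 0 (h i) = t / M) →
          d 0 (bchProd (List.ofFn h)) = t →
          ((Finset.univ.filter
              fun i : Fin M => nV (π (h i)) < R * (t / M)).card : ℝ) ≤
            K / (1 - R) ^ 2 := by
  obtain ⟨C, hC0, hC⟩ :=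
    exists_d_zero_le_mul_sqrt h2 hns hV hπmem hπid hπker hnV hnZ hd hdLeft hball
  refine ⟨C ^ 2 * K' + 1, by positivity, fun M hM t ht R hR0 hR1 h hdh hdt => ?_⟩
  have hM : (1 : ℝ) ≤ M := by exact_mod_cast hM
  set τ := t / M
  have hτ : 1 ≤ τ := by rw [le_div_iff₀ (by positivity)]; linarith
  set S := Finset.univ.filter fun i : Fin M => nV (π (h i)) < R * τ
  obtain ⟨h', hπ', hS, hSc⟩ := exists_family_proj_eq_d_zero_le hπmem hnV hd hball S h
  have hshort : ∀ i ∈ S, d 0 (h' i) ≤ R * τ := fun i hi =>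
    (hS i hi).trans (Finset.mem_filter.1 hi).2.le
  have hcentral : ∀ i, h i - h' i ∈ derivedSubalg 𝔫 := fun i =>
    sub_mem_derivedSubalg_of_proj_eq hV hπid hπker (hπ' i).symm
  have hshortened : d 0 (bchProd (List.ofFn h')) ≤ S.card * (R * τ) + (M - S.card) * τ := by
    grw [hd.zero_bchProd_le hdLeft, List.map_ofFn, List.sum_ofFn]
    simpa using S.sum_le_card_mul_add_card_compl_mul hshort fun i hi => (hSc i hi ▸ hdh i).le
  have hcorrection : nZ (∑ i, (h i - h' i)) ≤ S.card * (K' * τ ^ 2) :=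
    apply_sum_sub_le_card_mul h2 hnZ hKbound hτ S h h' hcentral (fun i => (hdh i).le)
      (fun i hi => (hshort i hi).trans (by nlinarith)) hSc
  have hgeo : t ≤ d 0 (bchProd (List.ofFn h')) + C * √(nZ (∑ i, (h i - h' i))) := by
    grw [← hdt, ← hC _ (Submodule.sum_mem _ fun i _ => hcentral i)]
    exact hd.zero_bchProd_ofFn_le_add h2 hdLeft h h' hcentral
  have hkey : S.card * ((1 - R) * τ) ≤ C * √(S.card * (K' * τ ^ 2)) := by
    grw [hshortened, hcorrection, ← mul_div_cancel₀ t (by positivity : (M : ℝ) ≠ 0)] at hgeo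
    linarith
  have := mul_sq_le_of_mul_le_mul_sqrt (Nat.cast_nonneg _) (by nlinarith) (by positivity) hkey
  rw [le_div_iff₀ (by nlinarith)]
  nlinarith [pow_pos (by linarith : (0 : ℝ) < τ) 2]
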